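/- Let L/K be a finite Galois field extension with group Γ, and let H be a group. For V a finite-dimensional L-linear representation of H, regarded as a K-linear representation by restriction, there is an isomorphism of L ⋊ (H × Γ)-modules L ⊗_K V ≅ (L ⋊ (H × Γ)) ⊗_{L[H]} V, where H × Γ acts on L through projection to Γ. -/

import Mathlib

open scoped TensorProduct

universe u

/-! The Casimir element `e = ∑ bᵢ ⊗ bᵢ^∨` of the trace form (`bᵢ^∨` the trace-dual basis)
satisfies `(c ⊗ 1) e = (1 ⊗ c) e`, and `∑ bᵢ γ(bᵢ^∨)` is `1` for `γ = 1` and `0` otherwise: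
`e` is the idempotent cutting out the identity factor of `L ⊗_K L ≅ ∏_Γ L`. Hence
`v ↦ ∑ bᵢ ⊗ bᵢ^∨ v` is an `L[H]`-linear map `V → L ⊗_K V`, which the universal property
extends to an equivariant `F : T → L ⊗_K V`. Conversely `c ⊗ v ↦ c · ∑_γ γ · β(v)` is an
equivariant map `G : L ⊗_K V → T`; the two identities for `e` give `F ∘ G = id`, and uniqueness
in the universal property gives `G ∘ F = id`. -/

namespace Module.Basis

open Algebra TensorProduct

variable {K L ι : Type*} [Field K] [Field L] [Algebra K L] [FiniteDimensional K L]
  [Fintype ι] [DecidableEq ι] (b : Basis ι K L)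

section Separable

variable [Algebra.IsSeparable K L]

theorem sum_trace_mul_smul_traceDual (x : L) :
    ∑ i, trace K L (x * b i) • b.traceDual i = x := by
  simpa using b.traceDual.sum_repr x

theorem sum_trace_mul_traceDual_smul (x : L) :
    ∑ i, trace K L (x * b.traceDual i) • b i = x := by
  simpa using b.traceDual.sum_trace_mul_smul_traceDual x

theorem sum_mul_tmul_traceDual (c : L) :
    ∑ i, (c * b i) ⊗ₜ[K] b.traceDual i = ∑ i, b i ⊗ₜ[K] (b.traceDual i * c) := by
  have expand_left (i : ι) : (c * b i) ⊗ₜ[K] b.traceDual i =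
      ∑ j, trace K L (c * b i * b.traceDual j) • (b j ⊗ₜ[K] b.traceDual i) := by
    conv_lhs => rw [← b.sum_trace_mul_traceDual_smul (c * b i)]
    simp only [sum_tmul, smul_tmul']
  have expand_right (j : ι) : b j ⊗ₜ[K] (b.traceDual j * c) =
      ∑ i, trace K L (c * b i * b.traceDual j) • (b j ⊗ₜ[K] b.traceDual i) := by
    conv_lhs => rw [← b.sum_trace_mul_smul_traceDual (b.traceDual j * c)]
    simp only [tmul_sum, tmul_smul, mul_comm, mul_left_comm]
  simp only [expand_left, expand_right]
  exact Finset.sum_comm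

end Separable

variable [IsGalois K L]

theorem sum_mul_algEquiv_traceDual_of_ne_one {γ : L ≃ₐ[K] L} (hγ : γ ≠ 1) :
    ∑ i, b i * γ (b.traceDual i) = 0 := by
  obtain ⟨c, hc⟩ : ∃ c, γ c ≠ c := by
    by_contra! h
    exact hγ (AlgEquiv.ext h)
  have h := congrArg (LinearMap.mul' K L ∘ₗ map LinearMap.id γ.toLinearMap)
    (b.sum_mul_tmul_traceDual c)
  simp only [map_sum, LinearMap.comp_apply, TensorProduct.map_tmul, LinearMap.mul'_apply,
    LinearMap.id_apply, AlgEquiv.toLinearMap_apply, map_mul] at h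
  have hs : (c - γ c) * ∑ i, b i * γ (b.traceDual i) = 0 := by
    rw [sub_mul, sub_eq_zero, Finset.mul_sum, Finset.mul_sum]
    convert h using 2 with i <;> ring
  exact (mul_eq_zero.mp hs).resolve_left (sub_ne_zero.mpr hc.symm)

theorem sum_mul_traceDual : ∑ i, b i * b.traceDual i = 1 := calc
  ∑ i, b i * b.traceDual i = ∑ γ : L ≃ₐ[K] L, ∑ i, b i * γ (b.traceDual i) :=
    (Finset.sum_eq_single 1 (fun γ _ hγ ↦ b.sum_mul_algEquiv_traceDual_of_ne_one hγ)
      (by simp)).symm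
  _ = ∑ i, trace K L (1 * b.traceDual i) • b i := by
    simp only [Finset.sum_comm (γ := L ≃ₐ[K] L), one_mul, trace_eq_sum_automorphisms, smul_def,
      ← Finset.mul_sum, mul_comm]
  _ = 1 := b.sum_trace_mul_traceDual_smul 1

end Module.Basis

section BaseChange

open TensorProduct

variable {K L : Type*} [Field K] [Field L] [Algebra K L] {H : Type*} [Monoid H]
  {V : Type*} [AddCommGroup V] [Module K V] [Module L V] [IsScalarTower K L V]

def baseChangeRep (ρV : H →* (V ≃ₗ[L] V)) :
    H × (L ≃ₐ[K] L) →* ((L ⊗[K] V) ≃ₗ[K] (L ⊗[K] V)) where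
  toFun p := TensorProduct.congr p.2.toLinearEquiv ((ρV p.1).restrictScalars K)
  map_one' := LinearEquiv.toLinearMap_injective <| TensorProduct.ext' fun _ _ ↦ by simp
  map_mul' _ _ := LinearEquiv.toLinearMap_injective <| TensorProduct.ext' fun _ _ ↦ by simp

variable (ρV : H →* (V ≃ₗ[L] V))

@[simp]
theorem baseChangeRep_tmul (p : H × (L ≃ₐ[K] L)) (c : L) (v : V) :
    baseChangeRep ρV p (c ⊗ₜ v) = p.2 c ⊗ₜ ρV p.1 v :=
  rfl

theorem baseChangeRep_smul (p : H × (L ≃ₐ[K] L)) (c : L) (x : L ⊗[K] V) :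
    baseChangeRep ρV p (c • x) = p.2 c • baseChangeRep ρV p x := by
  induction x using TensorProduct.induction_on with
  | zero => simp
  | tmul a v => simp [smul_tmul']
  | add x y hx hy => simp only [smul_add, map_add, hx, hy]

end BaseChange

section Casimir

open Module TensorProduct

variable {K L ι : Type*} [Field K] [Field L] [Algebra K L] [FiniteDimensional K L]
  [Fintype ι] [DecidableEq ι] (b : Basis ι K L)
  {V : Type*} [AddCommGroup V] [Module K V] [Module L V] [IsScalarTower K L V]

noncomputable def Module.Basis.tensorTraceDual [Algebra.IsSeparable K L] :
    V →ₗ[L] L ⊗[K] V where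
  toFun v := ∑ i, b i ⊗ₜ (b.traceDual i • v)
  map_add' v w := by simp only [smul_add, tmul_add, Finset.sum_add_distrib]
  map_smul' c v := by
    have h := congrArg (map LinearMap.id ((LinearMap.toSpanSingleton L V v).restrictScalars K))
      (b.sum_mul_tmul_traceDual c)
    simp only [map_sum, map_tmul, LinearMap.id_apply, LinearMap.coe_restrictScalars,
      LinearMap.toSpanSingleton_apply] at h
    simp only [Finset.smul_sum, smul_tmul', smul_eq_mul, RingHom.id_apply, h, mul_smul]

theorem Module.Basis.tensorTraceDual_apply [Algebra.IsSeparable K L] (v : V) :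
    b.tensorTraceDual v = ∑ i, b i ⊗ₜ (b.traceDual i • v) :=
  rfl

variable {H : Type*} [Monoid H] (ρV : H →* (V ≃ₗ[L] V))

theorem Module.Basis.tensorTraceDual_map [Algebra.IsSeparable K L] (h : H) (v : V) :
    b.tensorTraceDual (ρV h v) = baseChangeRep ρV (h, 1) (b.tensorTraceDual v) := by
  simp [tensorTraceDual_apply]

variable [IsGalois K L]

theorem Module.Basis.sum_baseChangeRep_tensorTraceDual (v : V) :
    ∑ γ : L ≃ₐ[K] L, baseChangeRep ρV (1, γ) (b.tensorTraceDual v) = 1 ⊗ₜ v := calc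
  _ = ∑ i, (∑ γ : L ≃ₐ[K] L, γ (b i)) ⊗ₜ (b.traceDual i • v) := by
    simp only [tensorTraceDual_apply, map_sum, baseChangeRep_tmul, map_one, LinearEquiv.coe_one,
      id_eq, sum_tmul]
    exact Finset.sum_comm
  _ = 1 ⊗ₜ ((∑ i, Algebra.trace K L (1 * b i) • b.traceDual i) • v) := by
    simp only [← trace_eq_sum_automorphisms, one_mul, Algebra.algebraMap_eq_smul_one,
      smul_tmul, Finset.sum_smul, tmul_sum, smul_assoc]
  _ = 1 ⊗ₜ v := by rw [b.sum_trace_mul_smul_traceDual]; simp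

end Casimir

section TraceLift

open TensorProduct

variable {K L : Type*} [Field K] [Field L] [Algebra K L] [FiniteDimensional K L]
  {H : Type*} [Monoid H]
  {V : Type*} [AddCommGroup V] [Module K V] [Module L V] [IsScalarTower K L V]
  {T : Type*} [AddCommGroup T] [Module K T] [Module L T] [IsScalarTower K L T]
  (ρT : H × (L ≃ₐ[K] L) →* (T ≃ₗ[K] T)) (β : V →ₗ[L] T)

noncomputable def traceLift : L ⊗[K] V →ₗ[L] T :=
  AlgebraTensorModule.lift <| LinearMap.toSpanSingleton L (V →ₗ[K] T) <|
    ∑ γ : L ≃ₐ[K] L, (ρT (1, γ)).toLinearMap ∘ₗ β.restrictScalars K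

@[simp]
theorem traceLift_tmul (c : L) (v : V) :
    traceLift ρT β (c ⊗ₜ v) = c • ∑ γ : L ≃ₐ[K] L, ρT (1, γ) (β v) := by
  simp [traceLift]

variable {ρT β}

theorem traceLift_baseChangeRep {ρV : H →* (V ≃ₗ[L] V)}
    (hρT : ∀ (p : H × (L ≃ₐ[K] L)) (c : L) (t : T), ρT p (c • t) = p.2 c • ρT p t)
    (hβ : ∀ (h : H) (v : V), β (ρV h v) = ρT (h, 1) (β v))
    (p : H × (L ≃ₐ[K] L)) (x : L ⊗[K] V) :
    traceLift ρT β (baseChangeRep ρV p x) = ρT p (traceLift ρT β x) := by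
  induction x using TensorProduct.induction_on with
  | zero => simp
  | add x y hx hy => simp only [map_add, hx, hy]
  | tmul c v =>
    obtain ⟨h, δ⟩ := p
    have shift (γ : L ≃ₐ[K] L) : ρT (1, γ) (β (ρV h v)) = ρT (h, γ) (β v) := by
      rw [hβ, ← LinearEquiv.mul_apply, ← map_mul, Prod.mk_mul_mk, one_mul, mul_one]
    have twist (γ : L ≃ₐ[K] L) : ρT (h, δ) (ρT (1, γ) (β v)) = ρT (h, δ * γ) (β v) := by
      rw [← LinearEquiv.mul_apply, ← map_mul, Prod.mk_mul_mk, mul_one]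
    simp only [baseChangeRep_tmul, traceLift_tmul, hρT, map_sum, shift, twist]
    congr 1
    exact (Fintype.sum_equiv (Equiv.mulLeft δ) _ _ fun _ ↦ rfl).symm

theorem Module.Basis.traceLift_tensorTraceDual [IsGalois K L] {ι : Type*} [Fintype ι]
    [DecidableEq ι] (b : Module.Basis ι K L)
    (hρT : ∀ (p : H × (L ≃ₐ[K] L)) (c : L) (t : T), ρT p (c • t) = p.2 c • ρT p t) (v : V) :
    traceLift ρT β (b.tensorTraceDual v) = β v := calc
  _ = ∑ γ : L ≃ₐ[K] L, (∑ i, b i * γ (b.traceDual i)) • ρT (1, γ) (β v) := by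
    simp only [tensorTraceDual_apply, map_sum, traceLift_tmul, map_smul, hρT, Finset.smul_sum,
      smul_smul, Finset.sum_smul]
    exact Finset.sum_comm
  _ = β v := by
    rw [Finset.sum_eq_single 1 (fun γ _ hγ ↦ by rw [b.sum_mul_algEquiv_traceDual_of_ne_one hγ,
      zero_smul]) (by simp)]
    rw [Prod.mk_one_one, map_one, LinearEquiv.coe_one, id_eq]
    simp only [AlgEquiv.one_apply, b.sum_mul_traceDual, one_smul]

end TraceLift

section Induced

variable {K L : Type*} [Field K] [Field L] [Algebra K L] {H : Type*} [Monoid H]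
  {V : Type*} [AddCommGroup V] [Module L V]
  {T : Type*} [AddCommGroup T] [Module K T] [Module L T]

/-- The universal property of `(L ⋊ (H × Γ)) ⊗_{L[H]} V`, tested against targets in `Type u`. -/
def IsInducedRep (ρV : H →* (V ≃ₗ[L] V)) (ρT : H × (L ≃ₐ[K] L) →* (T ≃ₗ[K] T))
    (β : V →ₗ[L] T) : Prop :=
  ∀ (U : Type u) [AddCommGroup U] [Module K U] [Module L U] [IsScalarTower K L U]
    (ρU : (H × (L ≃ₐ[K] L)) →* (U ≃ₗ[K] U)),
    (∀ (p : H × (L ≃ₐ[K] L)) (c : L) (x : U), ρU p (c • x) = p.2 c • ρU p x) →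
    ∀ f : V →ₗ[L] U, (∀ (h : H) (v : V), f (ρV h v) = ρU (h, 1) (f v)) →
    ∃! F : T →ₗ[L] U,
      (∀ (p : H × (L ≃ₐ[K] L)) (t : T), F (ρT p t) = ρU p (F t)) ∧
      ∀ v : V, F (β v) = f v

theorem IsInducedRep.exists_lift_of_linearEquiv {ρV : H →* (V ≃ₗ[L] V)}
    {ρT : H × (L ≃ₐ[K] L) →* (T ≃ₗ[K] T)} {β : V →ₗ[L] T} (hT : IsInducedRep.{u} ρV ρT β)
    {U : Type u} [AddCommGroup U] [Module K U] [Module L U] [IsScalarTower K L U]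
    {W : Type*} [AddCommGroup W] [Module K W] [Module L W] [IsScalarTower K L W]
    (e : U ≃ₗ[L] W) {ρ : H × (L ≃ₐ[K] L) →* (W ≃ₗ[K] W)}
    (hρ : ∀ (p : H × (L ≃ₐ[K] L)) (c : L) (x : W), ρ p (c • x) = p.2 c • ρ p x)
    {f : V →ₗ[L] W} (hf : ∀ (h : H) (v : V), f (ρV h v) = ρ (h, 1) (f v)) :
    ∃ F : T →ₗ[L] W, (∀ (p : H × (L ≃ₐ[K] L)) (t : T), F (ρT p t) = ρ p (F t)) ∧
      ∀ v : V, F (β v) = f v := by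
  let eK := e.restrictScalars K
  let ρU : H × (L ≃ₐ[K] L) →* (U ≃ₗ[K] U) :=
    { toFun p := eK.trans ((ρ p).trans eK.symm)
      map_one' := by ext; simp
      map_mul' _ _ := by ext; simp }
  obtain ⟨F, ⟨hFρ, hFβ⟩, -⟩ := hT U ρU (fun p c x ↦ by simp [ρU, eK, hρ])
    (e.symm.toLinearMap ∘ₗ f) (fun h v ↦ by simp [ρU, eK, hf])
  exact ⟨e.toLinearMap ∘ₗ F, fun p t ↦ by simp [hFρ, ρU, eK], fun v ↦ by simp [hFβ]⟩

end Induced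

open Module in
/-- A model of `L ⊗[K] V` in the universe of `V`, to which `IsInducedRep` applies. -/
theorem nonempty_linearEquiv_fun_baseChange (K L V : Type*) [Field K] [Field L] [Algebra K L]
    [FiniteDimensional K L] [AddCommGroup V] [Module K V] [Module L V] [IsScalarTower K L V] :
    Nonempty ((Fin (finrank K L) → V) ≃ₗ[L] L ⊗[K] V) := by
  rw [nonempty_linearEquiv_iff_lift_rank_eq, rank_fun_eq_lift_mul, rank_baseChange,
    ← lift_rank_mul_lift_rank K L V, ← finrank_eq_rank K L]
  simp only [Fintype.card_fin, Cardinal.lift_natCast, Cardinal.lift_mul, Cardinal.lift_lift]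

theorem stmt6 {K L : Type*} [Field K] [Field L] [Algebra K L]
    [FiniteDimensional K L] [IsGalois K L]
    {H : Type*} [Group H]
    (V : Type u) [AddCommGroup V] [Module K V] [Module L V] [IsScalarTower K L V]
    (ρV : H →* (V ≃ₗ[L] V))
    -- `(T, ρT, β)`: a semilinear representation of `H × Γ` over `L` together with an
    -- `L[H]`-linear map `β : V → T`
    (T : Type u) [AddCommGroup T] [Module K T] [Module L T] [IsScalarTower K L T]
    (ρT : (H × (L ≃ₐ[K] L)) →* (T ≃ₗ[K] T))
    (hρT : ∀ (p : H × (L ≃ₐ[K] L)) (c : L) (t : T), ρT p (c • t) = p.2 c • ρT p t)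
    (β : V →ₗ[L] T) (hβ : ∀ (h : H) (v : V), β (ρV h v) = ρT (h, 1) (β v))
    -- universal property of the induced module `(L ⋊ (H × Γ)) ⊗_{L[H]} V`
    (huniv : ∀ (U : Type u) [AddCommGroup U] [Module K U] [Module L U]
      [IsScalarTower K L U] (ρU : (H × (L ≃ₐ[K] L)) →* (U ≃ₗ[K] U)),
      (∀ (p : H × (L ≃ₐ[K] L)) (c : L) (x : U), ρU p (c • x) = p.2 c • ρU p x) →
      ∀ f : V →ₗ[L] U, (∀ (h : H) (v : V), f (ρV h v) = ρU (h, 1) (f v)) →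
      ∃! F : T →ₗ[L] U,
        (∀ (p : H × (L ≃ₐ[K] L)) (t : T), F (ρT p t) = ρU p (F t)) ∧
        ∀ v : V, F (β v) = f v) :
    -- conclusion: `T ≅ L ⊗_K V` equivariantly and `L`-linearly
    ∃ e : T ≃ₗ[L] (L ⊗[K] V),
      ∀ (h : H) (γ : L ≃ₐ[K] L) (t : T),
        e (ρT (h, γ) t)
          = TensorProduct.map γ.toLinearMap
              ((ρV h).toLinearMap.restrictScalars K) (e t) := by
  classical
  let b := Module.finBasis K L
  obtain ⟨ε⟩ := nonempty_linearEquiv_fun_baseChange K L V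
  obtain ⟨F, hFρ, hFβ⟩ := IsInducedRep.exists_lift_of_linearEquiv huniv ε
    (baseChangeRep_smul ρV) (b.tensorTraceDual_map ρV)
  let G := traceLift ρT β
  have hFG : F ∘ₗ G = LinearMap.id := TensorProduct.AlgebraTensorModule.ext fun c v ↦ calc
    F (G (c ⊗ₜ v)) = c • ∑ γ : L ≃ₐ[K] L, baseChangeRep ρV (1, γ) (b.tensorTraceDual v) := by
      simp [G, hFρ, hFβ]
    _ = c ⊗ₜ v := by
      rw [b.sum_baseChangeRep_tensorTraceDual, TensorProduct.smul_tmul', smul_eq_mul, mul_one]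
  have hGF : G ∘ₗ F = LinearMap.id := (huniv T ρT hρT β hβ).unique
    ⟨fun p t ↦ by simp [G, hFρ, traceLift_baseChangeRep hρT hβ],
      fun v ↦ by simp [G, hFβ, b.traceLift_tensorTraceDual hρT]⟩
    ⟨fun _ _ ↦ rfl, fun _ ↦ rfl⟩
  exact ⟨.ofLinearMap F G hFG hGF, fun h γ t ↦ hFρ (h, γ) t⟩
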